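/- Fix a, b with 0 < a < b < 1. For every real τ ≥ 0 and every integer ℓ ≥ 1, define the two-dimensional conformal block g(z, z̄) := (1/2)·[ k_τ(z̄) k_{τ+2ℓ}(z) + k_τ(z) k_{τ+2ℓ}(z̄) ]. Then for all z, z̄ with 0 ≤ z̄ ≤ a < b ≤ z < 1 one has the two-sided bound (1/2)·k_τ(z̄) k_{τ+2ℓ}(z) ≤ g(z, z̄) ≤ (1/2)·(1 + (1 − ρ(a)²)^{−1/2}) · k_τ(z̄) k_{τ+2ℓ}(z), where ρ(a) := a/(1 + √(1−a))². -/

import Mathlib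

/-! Since `(1 - ρ(a)²)^(-1/2) ≥ 1` and `k ≥ 0`, both bounds follow from
`k_τ(z) k_{τ+2ℓ}(z̄) ≤ k_τ(z̄) k_{τ+2ℓ}(z)` for `z̄ ≤ z`, i.e. from `k_{β'}/k_β` increasing when
`β ≤ β'`. The prefactors contribute `z^((β'-β)/2)`. The coefficients `c_β(n)` of
`₂F₁(β/2, β/2; β)` have term ratio `c_β(n+1)/c_β(n) = (β/2+n)²/((β+n)(n+1))`, increasing in `β`,
so `c_{β'}(n)/c_β(n)` increases in `n`; pairing the terms `(m,n)` and `(n,m)` of a product of two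
such power series (a rearrangement inequality) shows that the ratio of the sums increases too. -/

/-- `k_β(z) = z^(β/2) ∑_{n≥0} ((β/2)_n)² / ((β)_n n!) · zⁿ`
(equal to `z^(β/2) ₂F₁(β/2, β/2; β; z)`; for `β = 0` the series is the constant 1). -/
noncomputable def kfun (β z : ℝ) : ℝ :=
  z ^ (β / 2) * ∑' n : ℕ,
    (Polynomial.eval (β / 2) (ascPochhammer ℝ n)) ^ 2 /
      (Polynomial.eval β (ascPochhammer ℝ n) * (n.factorial : ℝ)) * z ^ n

/-- `ρ(z) = z/(1 + √(1-z))²`. -/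
noncomputable def rhoVar (z : ℝ) : ℝ := z / (1 + Real.sqrt (1 - z)) ^ 2

open scoped Nat

lemma pow_mul_pow_le_pow_mul_pow {R : Type*} [CommSemiring R] [PartialOrder R] [IsOrderedRing R]
    {x y : R} (hy : 0 ≤ y) (hyx : y ≤ x) {m n : ℕ} (hmn : m ≤ n) :
    x ^ m * y ^ n ≤ y ^ m * x ^ n := by
  obtain ⟨d, rfl⟩ := Nat.exists_eq_add_of_le hmn
  have hxy : 0 ≤ x ^ m * y ^ m := mul_nonneg (pow_nonneg (hy.trans hyx) m) (pow_nonneg hy m)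
  calc x ^ m * y ^ (m + d) = x ^ m * y ^ m * y ^ d := by ring
    _ ≤ x ^ m * y ^ m * x ^ d := mul_le_mul_of_nonneg_left (pow_le_pow_left₀ hy hyx d) hxy
    _ = y ^ m * x ^ (m + d) := by ring

/-- Cross-multiplied form of: `(∑ d yⁿ) / (∑ c yⁿ)` increases in `y ≥ 0` when `d n / c n` increases
in `n`. -/
lemma tsum_mul_pow_mul_tsum_mul_pow_le {c d : ℕ → ℝ} (hc : ∀ n, 0 ≤ c n) (hd : ∀ n, 0 ≤ d n)
    (hcd : ∀ m n, m ≤ n → c n * d m ≤ c m * d n) {x y : ℝ} (hy : 0 ≤ y) (hyx : y ≤ x)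
    (hcx : Summable fun n => c n * x ^ n) (hdx : Summable fun n => d n * x ^ n) :
    (∑' n, c n * x ^ n) * (∑' n, d n * y ^ n) ≤ (∑' n, c n * y ^ n) * (∑' n, d n * x ^ n) := by
  have hx : 0 ≤ x := hy.trans hyx
  have nonneg {e : ℕ → ℝ} (he : ∀ n, 0 ≤ e n) {t : ℝ} (ht : 0 ≤ t) :
      0 ≤ fun n => e n * t ^ n := fun n => mul_nonneg (he n) (pow_nonneg ht n)
  have at_y {e : ℕ → ℝ} (he : ∀ n, 0 ≤ e n) (hex : Summable fun n => e n * x ^ n) :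
      Summable fun n => e n * y ^ n :=
    hex.of_nonneg_of_le (nonneg he hy)
      fun n => mul_le_mul_of_nonneg_left (pow_le_pow_left₀ hy hyx n) (he n)
  have hcy := at_y hc hcx
  have hdy := at_y hd hdx
  set F : ℕ × ℕ → ℝ := fun p => c p.1 * x ^ p.1 * (d p.2 * y ^ p.2)
  set G : ℕ × ℕ → ℝ := fun p => c p.1 * y ^ p.1 * (d p.2 * x ^ p.2)
  have hF : Summable F := hcx.mul_of_nonneg hdy (nonneg hc hx) (nonneg hd hy)
  have hG : Summable G := hcy.mul_of_nonneg hdx (nonneg hc hy) (nonneg hd hx)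
  have summable_swap {H : ℕ × ℕ → ℝ} (hH : Summable H) : Summable fun p : ℕ × ℕ => H p.swap :=
    (Equiv.prodComm ℕ ℕ).summable_iff.2 hH
  have symmetrize {H : ℕ × ℕ → ℝ} (hH : Summable H) :
      ∑' p, H p + ∑' p, H p = ∑' p, (H p + H p.swap) := by
    rw [hH.tsum_add (summable_swap hH)]
    exact congrArg _ ((Equiv.prodComm ℕ ℕ).tsum_eq H).symm
  -- pairing `(m, n)` with `(n, m)` is the rearrangement inequality `Qu + Pv ≤ Qv + Pu`
  have pair_le {m n : ℕ} (hmn : m ≤ n) : F (m, n) + F (n, m) ≤ G (m, n) + G (n, m) := by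
    have hQP := hcd m n hmn
    have huv := pow_mul_pow_le_pow_mul_pow hy hyx hmn
    simp only [F, G]
    nlinarith [mul_nonneg (sub_nonneg.2 hQP) (sub_nonneg.2 huv)]
  have hpair (p : ℕ × ℕ) : F p + F p.swap ≤ G p + G p.swap := by
    obtain ⟨m, n⟩ := p
    rcases le_total m n with hmn | hnm
    · exact pair_le hmn
    · rw [Prod.swap_prod_mk]
      linarith [pair_le hnm]
  have hsum : ∑' p, F p + ∑' p, F p ≤ ∑' p, G p + ∑' p, G p := by
    rw [symmetrize hF, symmetrize hG]
    exact Summable.tsum_le_tsum hpair (hF.add (summable_swap hF)) (hG.add (summable_swap hG))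
  rw [hcx.tsum_mul_tsum hdy hF, hcy.tsum_mul_tsum hdx hG]
  linarith

lemma ascPochhammer_eval_nonneg {x : ℝ} (hx : 0 ≤ x) (n : ℕ) :
    0 ≤ (ascPochhammer ℝ n).eval x := by
  rcases hx.eq_or_lt with rfl | hx
  · rw [ascPochhammer_eval_zero]
    split_ifs <;> norm_num
  · exact (ascPochhammer_pos n x hx).le

noncomputable def kCoeff (β : ℝ) (n : ℕ) : ℝ :=
  (ascPochhammer ℝ n).eval (β / 2) ^ 2 / ((ascPochhammer ℝ n).eval β * n !)

lemma kfun_eq (β z : ℝ) : kfun β z = z ^ (β / 2) * ∑' n, kCoeff β n * z ^ n := rfl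

lemma kCoeff_nonneg {β : ℝ} (hβ : 0 ≤ β) (n : ℕ) : 0 ≤ kCoeff β n :=
  div_nonneg (sq_nonneg _) (mul_nonneg (ascPochhammer_eval_nonneg hβ n) (n !).cast_nonneg)

noncomputable def kCoeffRatio (β : ℝ) (n : ℕ) : ℝ := (β / 2 + n) ^ 2 / ((β + n) * (n + 1))

lemma kCoeff_succ (β : ℝ) (n : ℕ) : kCoeff β (n + 1) = kCoeff β n * kCoeffRatio β n := by
  simp only [kCoeff, kCoeffRatio, ascPochhammer_succ_eval, Nat.factorial_succ, Nat.cast_mul,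
    Nat.cast_succ]
  rw [div_mul_div_comm, mul_pow]
  ring

lemma kCoeffRatio_nonneg {β : ℝ} (hβ : 0 ≤ β) (n : ℕ) : 0 ≤ kCoeffRatio β n :=
  div_nonneg (sq_nonneg _) (by positivity)

lemma kCoeffRatio_le_kCoeffRatio {β β' : ℝ} (hβ : 0 ≤ β) (hββ' : β ≤ β') (n : ℕ) :
    kCoeffRatio β n ≤ kCoeffRatio β' n := by
  have hn : (0 : ℝ) ≤ n := n.cast_nonneg
  rcases (add_nonneg hβ hn).eq_or_lt with hzero | hpos
  · rw [kCoeffRatio, ← hzero, zero_mul, div_zero]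
    exact kCoeffRatio_nonneg (hβ.trans hββ') n
  -- with `h = β/2`, `d = (β' - β)/2`: `(h+d+n)²(2h+n) - (h+n)²(2h+2d+n) = 2hd(h+n) + d²(2h+n)`
  have key : (β / 2 + n) ^ 2 * (β' + n) ≤ (β' / 2 + n) ^ 2 * (β + n) := by
    nlinarith [mul_nonneg (mul_nonneg hβ (sub_nonneg.2 hββ')) (add_nonneg hβ hn),
      mul_nonneg (sq_nonneg (β' - β)) (add_nonneg hβ hn)]
  rw [kCoeffRatio, kCoeffRatio, div_le_div_iff₀ (by positivity) (by nlinarith)]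
  nlinarith [mul_le_mul_of_nonneg_right key (by positivity : (0 : ℝ) ≤ n + 1)]

lemma kCoeff_mul_kCoeff_le {β β' : ℝ} (hβ : 0 ≤ β) (hββ' : β ≤ β') {m n : ℕ} (hmn : m ≤ n) :
    kCoeff β n * kCoeff β' m ≤ kCoeff β m * kCoeff β' n := by
  induction n, hmn using Nat.le_induction with
  | base => exact le_rfl
  | succ n _ ih =>
    have hprod : 0 ≤ kCoeff β m * kCoeff β' n :=
      mul_nonneg (kCoeff_nonneg hβ m) (kCoeff_nonneg (hβ.trans hββ') n)
    calc kCoeff β (n + 1) * kCoeff β' m = kCoeff β n * kCoeff β' m * kCoeffRatio β n := by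
          rw [kCoeff_succ]; ring
      _ ≤ kCoeff β m * kCoeff β' n * kCoeffRatio β n :=
          mul_le_mul_of_nonneg_right ih (kCoeffRatio_nonneg hβ n)
      _ ≤ kCoeff β m * kCoeff β' n * kCoeffRatio β' n :=
          mul_le_mul_of_nonneg_left (kCoeffRatio_le_kCoeffRatio hβ hββ' n) hprod
      _ = kCoeff β m * kCoeff β' (n + 1) := by rw [kCoeff_succ]; ring

lemma kCoeff_eq_ordinaryHypergeometricCoefficient (β : ℝ) (n : ℕ) :
    kCoeff β n = ordinaryHypergeometricCoefficient (β / 2) (β / 2) β n := by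
  rw [kCoeff, div_eq_mul_inv, mul_inv]
  ring

lemma summable_kCoeff_mul_pow {β x : ℝ} (hβ : 0 ≤ β) (hx : |x| < 1) :
    Summable fun n => kCoeff β n * x ^ n := by
  set p := ordinaryHypergeometricSeries ℝ (β / 2) (β / 2) β
  have hradius : 1 ≤ p.radius := by
    rcases hβ.eq_or_lt with rfl | hβ
    · have := ordinaryHypergeometric_radius_top_of_neg_nat₁ ℝ (0 : ℝ) 0 (k := 0)
      simp_all [p]
    · refine (ordinaryHypergeometricSeries_radius_eq_one ℝ _ _ _ fun k => ?_).ge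
      have hk : (0 : ℝ) ≤ k := k.cast_nonneg
      refine ⟨?_, ?_, ?_⟩ <;> intro h <;> linarith
  have hmem : x ∈ Metric.eball (0 : ℝ) p.radius := by
    rw [mem_eball_zero_iff, Real.enorm_eq_ofReal_abs]
    exact (ENNReal.ofReal_lt_one.2 hx).trans_le hradius
  refine Summable.of_norm ((p.summable_norm_apply hmem).congr fun n => ?_)
  rw [ordinaryHypergeometricSeries_apply_eq, smul_eq_mul,
    kCoeff_eq_ordinaryHypergeometricCoefficient]

lemma tsum_kCoeff_mul_pow_nonneg {β z : ℝ} (hβ : 0 ≤ β) (hz : 0 ≤ z) :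
    0 ≤ ∑' n, kCoeff β n * z ^ n :=
  tsum_nonneg fun n => mul_nonneg (kCoeff_nonneg hβ n) (pow_nonneg hz n)

lemma kfun_nonneg {β z : ℝ} (hβ : 0 ≤ β) (hz : 0 ≤ z) : 0 ≤ kfun β z :=
  mul_nonneg (Real.rpow_nonneg hz _) (tsum_kCoeff_mul_pow_nonneg hβ hz)

lemma rpow_mul_rpow_le_rpow_mul_rpow {x y s t : ℝ} (hy : 0 ≤ y) (hyx : y ≤ x) (hs : 0 ≤ s)
    (hst : s ≤ t) : x ^ s * y ^ t ≤ y ^ s * x ^ t := by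
  rcases hy.eq_or_lt with rfl | hy
  · rcases (hs.trans hst).eq_or_lt with rfl | ht
    · simp [le_antisymm hst hs]
    · rw [Real.zero_rpow ht.ne', mul_zero]
      exact mul_nonneg (Real.rpow_nonneg le_rfl s) (Real.rpow_nonneg hyx t)
  · have hx := hy.trans_le hyx
    calc x ^ s * y ^ t = x ^ s * y ^ s * y ^ (t - s) := by
          rw [mul_assoc, ← Real.rpow_add hy, add_sub_cancel]
      _ ≤ x ^ s * y ^ s * x ^ (t - s) :=
          mul_le_mul_of_nonneg_left (Real.rpow_le_rpow hy.le hyx (sub_nonneg.2 hst)) (by positivity)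
      _ = y ^ s * x ^ t := by rw [mul_comm (x ^ s), mul_assoc, ← Real.rpow_add hx, add_sub_cancel]

lemma kfun_mul_kfun_le {β β' x y : ℝ} (hβ : 0 ≤ β) (hββ' : β ≤ β') (hy : 0 ≤ y) (hyx : y ≤ x)
    (hx1 : x < 1) : kfun β x * kfun β' y ≤ kfun β y * kfun β' x := by
  have hβ' := hβ.trans hββ'
  have hx : |x| < 1 := abs_lt.2 ⟨by linarith, hx1⟩
  have hseries := tsum_mul_pow_mul_tsum_mul_pow_le (kCoeff_nonneg hβ) (kCoeff_nonneg hβ')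
    (fun _ _ => kCoeff_mul_kCoeff_le hβ hββ') hy hyx (summable_kCoeff_mul_pow hβ hx)
    (summable_kCoeff_mul_pow hβ' hx)
  have hpow : x ^ (β / 2) * y ^ (β' / 2) ≤ y ^ (β / 2) * x ^ (β' / 2) :=
    rpow_mul_rpow_le_rpow_mul_rpow hy hyx (by positivity) (by linarith)
  rw [kfun_eq, kfun_eq, kfun_eq, kfun_eq, mul_mul_mul_comm, mul_mul_mul_comm (y ^ _)]
  exact mul_le_mul hpow hseries
    (mul_nonneg (tsum_kCoeff_mul_pow_nonneg hβ (hy.trans hyx)) (tsum_kCoeff_mul_pow_nonneg hβ' hy))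
    (mul_nonneg (Real.rpow_nonneg hy _) (Real.rpow_nonneg (hy.trans hyx) _))

lemma abs_rhoVar_lt_one {a : ℝ} (ha : a < 1) : |rhoVar a| < 1 := by
  have hs := Real.sq_sqrt (sub_nonneg.2 ha.le)
  have hs0 := Real.sqrt_nonneg (1 - a)
  rw [rhoVar, abs_div, abs_of_pos (a := (1 + √(1 - a)) ^ 2) (by positivity),
    div_lt_one (by positivity), abs_lt]
  constructor <;> nlinarith

theorem stmt8_general (a b : ℝ) (hab : a < b) (hb : b < 1)
    (τ : ℝ) (hτ : 0 ≤ τ) (ℓ : ℕ)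
    (z zb : ℝ) (hzb0 : 0 ≤ zb) (hzba : zb ≤ a) (hbz : b ≤ z) (hz1 : z < 1) :
    (1 / 2) * (kfun τ zb * kfun (τ + 2 * (ℓ : ℝ)) z) ≤
      (1 / 2) * (kfun τ zb * kfun (τ + 2 * (ℓ : ℝ)) z +
        kfun τ z * kfun (τ + 2 * (ℓ : ℝ)) zb) ∧
    (1 / 2) * (kfun τ zb * kfun (τ + 2 * (ℓ : ℝ)) z +
        kfun τ z * kfun (τ + 2 * (ℓ : ℝ)) zb) ≤
      (1 / 2) * (1 + (1 - rhoVar a ^ 2) ^ (-(1 : ℝ) / 2)) *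
        (kfun τ zb * kfun (τ + 2 * (ℓ : ℝ)) z) := by
  have hττ' : τ ≤ τ + 2 * (ℓ : ℝ) := le_add_of_nonneg_right (by positivity)
  have hzbz : zb ≤ z := hzba.trans (hab.trans_le hbz).le
  have hz := hzb0.trans hzbz
  have hcross := kfun_mul_kfun_le hτ hττ' hzb0 hzbz hz1
  have hA := mul_nonneg (kfun_nonneg hτ hzb0) (kfun_nonneg (hτ.trans hττ') hz)
  have hB := mul_nonneg (kfun_nonneg hτ hz) (kfun_nonneg (hτ.trans hττ') hzb0)
  have hρ : rhoVar a ^ 2 < 1 := (sq_lt_one_iff_abs_lt_one _).2 (abs_rhoVar_lt_one (hab.trans hb))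
  have hC : 1 ≤ (1 - rhoVar a ^ 2) ^ (-(1 : ℝ) / 2) :=
    Real.one_le_rpow_of_pos_of_le_one_of_nonpos (by linarith) (by nlinarith) (by norm_num)
  constructor
  · linarith
  · nlinarith [mul_le_mul_of_nonneg_right hC hA]

/-- d = 2 case of the approximate factorization Lemma 2.6/A.1: for the
2D conformal block `g(z,z̄) = ½[k_τ(z̄)k_{τ+2ℓ}(z) + k_τ(z)k_{τ+2ℓ}(z̄)]` with spin
`ℓ ≥ 1`, one has the two-sided bound
`½ k_τ(z̄)k_{τ+2ℓ}(z) ≤ g(z,z̄) ≤ ½(1 + (1-ρ(a)²)^(-1/2)) k_τ(z̄)k_{τ+2ℓ}(z)`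
for `0 ≤ z̄ ≤ a < b ≤ z < 1`. -/
theorem stmt8 (a b : ℝ) (ha : 0 < a) (hab : a < b) (hb : b < 1)
    (τ : ℝ) (hτ : 0 ≤ τ) (ℓ : ℕ) (hℓ : 1 ≤ ℓ)
    (z zb : ℝ) (hzb0 : 0 ≤ zb) (hzba : zb ≤ a) (hbz : b ≤ z) (hz1 : z < 1) :
    (1 / 2) * (kfun τ zb * kfun (τ + 2 * (ℓ : ℝ)) z) ≤
      (1 / 2) * (kfun τ zb * kfun (τ + 2 * (ℓ : ℝ)) z +
        kfun τ z * kfun (τ + 2 * (ℓ : ℝ)) zb) ∧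
    (1 / 2) * (kfun τ zb * kfun (τ + 2 * (ℓ : ℝ)) z +
        kfun τ z * kfun (τ + 2 * (ℓ : ℝ)) zb) ≤
      (1 / 2) * (1 + (1 - rhoVar a ^ 2) ^ (-(1 : ℝ) / 2)) *
        (kfun τ zb * kfun (τ + 2 * (ℓ : ℝ)) z) :=
  stmt8_general a b hab hb τ hτ ℓ z zb hzb0 hzba hbz hz1
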